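/- arXiv:2503.13207 — 5 statements merged into one kernel-verified Lean document; each statement's English description precedes it below -/
import Mathlib

section
/- Let A and B be n×n complex matrices and let F : ℝ → ℝ be a Lipschitz continuous function with bounded support. Then (1/n) |Σ_{i=1}^{n} ( F(σ_i(A)) − F(σ_i(B)) )| ≤ ‖F'‖_1 · rank(A − B) / n. -/
open MeasureTheory

noncomputable def singularValues {n : ℕ} (A : Matrix (Fin n) (Fin n) ℂ) : Fin n → ℝ :=
  fun i => Real.sqrt ((Matrix.isHermitian_conjTranspose_mul_self A).eigenvalues i)

noncomputable def fCoeff (f : ℝ → ℂ) (j : ℤ) : ℂ :=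
  (1 / (2 * Real.pi)) * ∫ x in (-Real.pi)..Real.pi, f x * Complex.exp (-(Complex.I * j * x))

noncomputable def toeplitzMat (f : ℝ → ℂ) (n : ℕ) : Matrix (Fin n) (Fin n) ℂ :=
  Matrix.of fun i j => fCoeff f (((i : ℕ) : ℤ) - ((j : ℕ) : ℤ))

noncomputable def truncFourier (f : ℝ → ℂ) (N : ℕ) : ℝ → ℂ :=
  fun x => ∑ j ∈ Finset.Icc (-(N:ℤ)) (N:ℤ), fCoeff f j * Complex.exp (Complex.I * j * x)

noncomputable def l2Norm (g : ℝ → ℂ) : ℝ :=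
  Real.sqrt (∫ x in (0:ℝ)..(2*Real.pi), ‖g x‖ ^ 2)

noncomputable def totalVar (F : ℝ → ℝ) : ℝ := (eVariationOn F Set.univ).toReal

noncomputable def supNorm (F : ℝ → ℝ) : ℝ := ⨆ x, |F x|

/-!
Order the singular values decreasingly and let `r = rank (A - B)`. Since `A` and `B` agree on
`ker (A - B)`, a subspace of codimension `r`, the Courant–Fischer dimension count gives the
interlacing `σₖ₊ᵣ(A) ≤ σₖ(B)` and `σₖ₊ᵣ(B) ≤ σₖ(A)`. For monotone `p` this lets all but `r` terms
of `∑ₖ (p (σₖ(A)) - p (σₖ(B)))` be matched against each other with the right sign, so the sum is at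
most `r (p(M) - p(0))`. Writing `F = p - q` with `p`, `q` monotone and
`(p(M) - p(0)) + (q(M) - q(0))` the variation of `F` on `[0, M]` bounds the sum by `r` times the
total variation of `F`, which is finite because `F` is Lipschitz with compact support.
-/

open Module Submodule Finset

namespace OrthonormalBasis

variable {ι 𝕜 E : Type*} [Fintype ι] [RCLike 𝕜] [NormedAddCommGroup E] [InnerProductSpace 𝕜 E]
  (b : OrthonormalBasis ι 𝕜 E)

theorem repr_apply_eq_zero_of_mem_span {s : Set ι} {x : E} (hx : x ∈ span 𝕜 (b '' s)) {i : ι}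
    (hi : i ∉ s) : b.repr x i = 0 := by
  rw [← b.coe_toBasis, Basis.mem_span_image] at hx
  rw [← b.coe_toBasis_repr_apply]
  exact Finsupp.notMem_support_iff.mp fun h => hi (hx h)

theorem finrank_span_image (s : Finset ι) : finrank 𝕜 (span 𝕜 (b '' s)) = s.card := by
  have := finrank_span_eq_card
    (b.orthonormal.comp ((↑) : s → ι) Subtype.coe_injective).linearIndependent
  rw [Set.image_eq_range]
  simpa [Function.comp_def] using this

end OrthonormalBasis

theorem Submodule.exists_mem_inf_ne_zero_of_finrank_lt {K V : Type*} [DivisionRing K]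
    [AddCommGroup V] [Module K V] [FiniteDimensional K V] {p q : Submodule K V}
    (h : finrank K V < finrank K p + finrank K q) : ∃ x ∈ p ⊓ q, x ≠ 0 :=
  exists_mem_ne_zero_of_ne_bot fun hpq =>
    h.not_ge (finrank_add_finrank_le_of_disjoint (disjoint_iff.mpr hpq))

namespace LinearMap

variable {𝕜 E F : Type*} [RCLike 𝕜] [NormedAddCommGroup E] [InnerProductSpace 𝕜 E]
  [FiniteDimensional 𝕜 E] [NormedAddCommGroup F] [InnerProductSpace 𝕜 F] [FiniteDimensional 𝕜 F]

namespace IsSymmetric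

theorem eigenvalues_congr {U U' : E →ₗ[𝕜] E} (hU : U.IsSymmetric) (hU' : U'.IsSymmetric)
    (h : U = U') {m m' : ℕ} (hm : finrank 𝕜 E = m) (hm' : finrank 𝕜 E = m') (i : Fin m) :
    hU.eigenvalues hm i = hU'.eigenvalues hm' (Fin.cast (hm.symm.trans hm') i) := by
  subst h hm hm'
  rfl

variable {U : E →ₗ[𝕜] E} (hU : U.IsSymmetric) {n : ℕ} (hn : finrank 𝕜 E = n)

theorem re_inner_apply_self_eq_sum (x : E) :
    RCLike.re (inner 𝕜 (U x) x) =
      ∑ i, hU.eigenvalues hn i * ‖(hU.eigenvectorBasis hn).repr x i‖ ^ 2 := by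
  rw [← (hU.eigenvectorBasis hn).repr.inner_map_map, PiLp.inner_apply, map_sum]
  refine sum_congr rfl fun i _ => ?_
  rw [hU.eigenvectorBasis_apply_self_apply, ← smul_eq_mul, inner_smul_left, RCLike.conj_ofReal,
    inner_self_eq_norm_sq_to_K]
  norm_cast

variable {s : Set (Fin n)} {c : ℝ} {x : E} (hx : x ∈ span 𝕜 (hU.eigenvectorBasis hn '' s))
include hx

theorem mul_norm_sq_le_re_inner_apply_self (hc : ∀ i ∈ s, c ≤ hU.eigenvalues hn i) :
    c * ‖x‖ ^ 2 ≤ RCLike.re (inner 𝕜 (U x) x) := by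
  rw [hU.re_inner_apply_self_eq_sum hn, ← (hU.eigenvectorBasis hn).repr.norm_map,
    EuclideanSpace.norm_sq_eq, mul_sum]
  refine sum_le_sum fun i _ => ?_
  by_cases hi : i ∈ s
  · exact mul_le_mul_of_nonneg_right (hc i hi) (sq_nonneg _)
  · simp [(hU.eigenvectorBasis hn).repr_apply_eq_zero_of_mem_span hx hi]

theorem re_inner_apply_self_le_mul_norm_sq (hc : ∀ i ∈ s, hU.eigenvalues hn i ≤ c) :
    RCLike.re (inner 𝕜 (U x) x) ≤ c * ‖x‖ ^ 2 := by
  rw [hU.re_inner_apply_self_eq_sum hn, ← (hU.eigenvectorBasis hn).repr.norm_map,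
    EuclideanSpace.norm_sq_eq, mul_sum]
  refine sum_le_sum fun i _ => ?_
  by_cases hi : i ∈ s
  · exact mul_le_mul_of_nonneg_right (hc i hi) (sq_nonneg _)
  · simp [(hU.eigenvectorBasis hn).repr_apply_eq_zero_of_mem_span hx hi]

end IsSymmetric

theorem norm_apply_sq_eq_re_inner_adjoint_comp_self (T : E →ₗ[𝕜] F) (x : E) :
    ‖T x‖ ^ 2 = RCLike.re (inner 𝕜 ((adjoint T ∘ₗ T) x) x) := by
  rw [comp_apply, adjoint_inner_left, inner_self_eq_norm_sq]

theorem sq_singularValues_mul_norm_sq_le (T : E →ₗ[𝕜] F) {k : ℕ} (hk : k < finrank 𝕜 E) {x : E}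
    (hx : x ∈ span 𝕜 (T.isSymmetric_adjoint_comp_self.eigenvectorBasis rfl ''
      (Iic (⟨k, hk⟩ : Fin _) : Set (Fin _)))) :
    T.singularValues k ^ 2 * ‖x‖ ^ 2 ≤ ‖T x‖ ^ 2 := by
  rw [T.sq_singularValues_of_lt rfl hk, norm_apply_sq_eq_re_inner_adjoint_comp_self]
  exact T.isSymmetric_adjoint_comp_self.mul_norm_sq_le_re_inner_apply_self rfl hx fun j hj =>
    T.isSymmetric_adjoint_comp_self.eigenvalues_antitone rfl (mem_Iic.mp hj)

theorem norm_apply_sq_le_sq_singularValues_mul_norm_sq (T : E →ₗ[𝕜] F) {k : ℕ}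
    (hk : k < finrank 𝕜 E) {x : E}
    (hx : x ∈ span 𝕜 (T.isSymmetric_adjoint_comp_self.eigenvectorBasis rfl ''
      (Ici (⟨k, hk⟩ : Fin _) : Set (Fin _)))) :
    ‖T x‖ ^ 2 ≤ T.singularValues k ^ 2 * ‖x‖ ^ 2 := by
  rw [T.sq_singularValues_of_lt rfl hk, norm_apply_sq_eq_re_inner_adjoint_comp_self]
  exact T.isSymmetric_adjoint_comp_self.re_inner_apply_self_le_mul_norm_sq rfl hx fun j hj =>
    T.isSymmetric_adjoint_comp_self.eigenvalues_antitone rfl (mem_Ici.mp hj)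

theorem singularValues_add_le_of_finrank_range_sub_le (T S : E →ₗ[𝕜] F) {r : ℕ}
    (hr : finrank 𝕜 (range (T - S)) ≤ r) (i : ℕ) :
    T.singularValues (i + r) ≤ S.singularValues i := by
  set n := finrank 𝕜 E
  rcases le_or_gt n (i + r) with hir | hir
  · rw [T.singularValues_of_finrank_le hir]
    exact S.singularValues_nonneg i
  have hi : i < n := by omega
  set bT := T.isSymmetric_adjoint_comp_self.eigenvectorBasis rfl
  set bS := S.isSymmetric_adjoint_comp_self.eigenvectorBasis rfl
  set V := span 𝕜 (bT '' (Iic (⟨i + r, hir⟩ : Fin n) : Set (Fin n)))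
  set W := span 𝕜 (bS '' (Ici (⟨i, hi⟩ : Fin n) : Set (Fin n)))
  have hV : finrank 𝕜 V = i + r + 1 := by rw [bT.finrank_span_image, Fin.card_Iic]
  have hW : finrank 𝕜 W = n - i := by rw [bS.finrank_span_image, Fin.card_Ici]
  have hK : n ≤ finrank 𝕜 (ker (T - S)) + r := by
    have := (T - S).finrank_range_add_finrank_ker
    omega
  have hVW : finrank 𝕜 V + finrank 𝕜 W ≤ n + finrank 𝕜 ↥(V ⊓ W) := by
    have := finrank_sup_add_finrank_inf_eq V W
    have := (V ⊔ W).finrank_le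
    omega
  -- `(i + r + 1) + (n - i) + (n - r) > 2 n`, so `V`, `W` and `ker (T - S)` share a nonzero vector
  obtain ⟨x, ⟨⟨hxV, hxW⟩, hxK⟩, hx0⟩ :=
    exists_mem_inf_ne_zero_of_finrank_lt (p := V ⊓ W) (q := ker (T - S)) (by omega)
  have hsq : T.singularValues (i + r) ^ 2 * ‖x‖ ^ 2 ≤ S.singularValues i ^ 2 * ‖x‖ ^ 2 :=
    calc _ ≤ ‖T x‖ ^ 2 := T.sq_singularValues_mul_norm_sq_le hir hxV
      _ = ‖S x‖ ^ 2 := by rw [sub_eq_zero.mp hxK]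
      _ ≤ _ := S.norm_apply_sq_le_sq_singularValues_mul_norm_sq hi hxW
  exact le_of_sq_le_sq (le_of_mul_le_mul_right hsq (by positivity)) (S.singularValues_nonneg i)

end LinearMap

theorem Matrix.rank_eq_finrank_range_toEuclideanLin {𝕜 m n : Type*} [RCLike 𝕜] [Fintype m]
    [Fintype n] [DecidableEq n] (A : Matrix m n 𝕜) :
    A.rank = finrank 𝕜 (LinearMap.range (toEuclideanLin A)) :=
  A.rank_eq_finrank_range_toLin (PiLp.basisFun 2 𝕜 m) (PiLp.basisFun 2 𝕜 n)

open Matrix in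
theorem exists_equiv_singularValues_eq {n : ℕ} (A : Matrix (Fin n) (Fin n) ℂ) :
    ∃ e : Fin n ≃ Fin n, ∀ i, singularValues A i = (toEuclideanLin A).singularValues (e i) := by
  set T := toEuclideanLin A
  have hAA : toEuclideanLin (Aᴴ * A) = LinearMap.adjoint T ∘ₗ T := by
    rw [toLpLin_mul_same, toEuclideanLin_conjTranspose_eq_adjoint]
  refine ⟨(Fintype.equivOfCardEq (Fintype.card_fin _)).symm.trans
    (finCongr (Fintype.card_fin n)), fun i => ?_⟩
  rw [T.singularValues_fin finrank_euclideanSpace_fin, singularValues, IsHermitian.eigenvalues,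
    IsHermitian.eigenvalues₀, LinearMap.IsSymmetric.eigenvalues_congr _
      T.isSymmetric_adjoint_comp_self hAA _ finrank_euclideanSpace_fin]
  rfl

theorem sum_comp_singularValues_eq_sum_range {n : ℕ} (A : Matrix (Fin n) (Fin n) ℂ)
    (f : ℝ → ℝ) :
    ∑ i, f (singularValues A i) =
      ∑ k ∈ range n, f ((Matrix.toEuclideanLin A).singularValues k) := by
  obtain ⟨e, he⟩ := exists_equiv_singularValues_eq A
  rw [← Fin.sum_univ_eq_sum_range (fun k => f ((Matrix.toEuclideanLin A).singularValues k))]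
  simp only [he]
  exact e.sum_comp fun i => f ((Matrix.toEuclideanLin A).singularValues i)

theorem sum_range_sub_le_of_le_shift {p : ℝ → ℝ} (hp : Monotone p) {a b : ℕ → ℝ} {m M : ℝ}
    {n r : ℕ} (hrn : r ≤ n) (ha : ∀ k < n, a k ≤ M) (hb : ∀ k < n, m ≤ b k)
    (hab : ∀ k, a (k + r) ≤ b k) :
    ∑ k ∈ range n, (p (a k) - p (b k)) ≤ r * (p M - p m) := by
  obtain ⟨s, rfl⟩ := Nat.exists_eq_add_of_le hrn
  -- match `a (r + k)` with `b k` for `k < s`; the `r` unmatched terms on each side lie in `[m, M]`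
  have hpa : ∑ k ∈ range r, p (a k) ≤ r * p M := by
    simpa using sum_le_card_nsmul (range r) _ _ fun k hk =>
      hp (ha k (by rw [mem_range] at hk; omega))
  have hpb : r * p m ≤ ∑ k ∈ range r, p (b (s + k)) := by
    simpa using card_nsmul_le_sum (range r) _ _ fun k hk =>
      hp (hb (s + k) (by rw [mem_range] at hk; omega))
  have hshift : ∑ k ∈ range s, p (a (r + k)) ≤ ∑ k ∈ range s, p (b k) :=
    sum_le_sum fun k _ => hp (add_comm r k ▸ hab k)
  rw [sum_sub_distrib, sum_range_add, add_comm r s, sum_range_add]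
  linarith

section BoundedVariation

variable {F : ℝ → ℝ} (hF : BoundedVariationOn F Set.univ) {a b : ℕ → ℝ} {m M : ℝ} {n r : ℕ}
  (hrn : r ≤ n) (ha : ∀ k < n, a k ∈ Set.Icc m M) (hb : ∀ k < n, b k ∈ Set.Icc m M)
  (hab : ∀ k, a (k + r) ≤ b k) (hba : ∀ k, b (k + r) ≤ a k)
include hF hrn ha hb hab hba

theorem sum_range_sub_le_of_boundedVariationOn :
    ∑ k ∈ range n, (F (a k) - F (b k)) ≤ r * (eVariationOn F Set.univ).toReal := by
  obtain ⟨p, q, hp, hq, rfl, hpq⟩ := hF.locallyBoundedVariationOn.exists_monotoneOn_sub_monotoneOn'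
  rw [monotoneOn_univ] at hp hq
  have hpab := sum_range_sub_le_of_le_shift hp hrn (fun k hk => (ha k hk).2)
    (fun k hk => (hb k hk).1) hab
  have hqba := sum_range_sub_le_of_le_shift hq hrn (fun k hk => (hb k hk).2)
    (fun k hk => (ha k hk).1) hba
  have hvar : variationOnFromTo (p - q) Set.univ m M ≤ (eVariationOn (p - q) Set.univ).toReal :=
    (le_abs_self _).trans (variationOnFromTo.abs_le_eVariationOn hF)
  calc ∑ k ∈ range n, ((p - q) (a k) - (p - q) (b k))
      = ∑ k ∈ range n, (p (a k) - p (b k)) + ∑ k ∈ range n, (q (b k) - q (a k)) := by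
        rw [← sum_add_distrib]
        exact sum_congr rfl fun k _ => by simp only [Pi.sub_apply]; ring
    _ ≤ r * (p M - p m) + r * (q M - q m) := add_le_add hpab hqba
    _ = r * variationOnFromTo (p - q) Set.univ m M := by
        rw [← hpq m (Set.mem_univ _) M (Set.mem_univ _)]; ring
    _ ≤ r * (eVariationOn (p - q) Set.univ).toReal := by gcongr

theorem abs_sum_range_sub_le_of_boundedVariationOn :
    |∑ k ∈ range n, (F (a k) - F (b k))| ≤ r * (eVariationOn F Set.univ).toReal := by
  refine abs_le.mpr ⟨?_, sum_range_sub_le_of_boundedVariationOn hF hrn ha hb hab hba⟩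
  have := sum_range_sub_le_of_boundedVariationOn hF hrn hb ha hba hab
  rw [← neg_le_neg_iff, ← sum_neg_distrib] at this
  simpa using this

end BoundedVariation

theorem LipschitzWith.boundedVariationOn_of_hasCompactSupport {E : Type*}
    [NormedAddCommGroup E] {K : NNReal} {f : ℝ → E} (hf : LipschitzWith K f)
    (h : HasCompactSupport f) : BoundedVariationOn f Set.univ := by
  obtain ⟨R, hR, hfR⟩ := h.exists_pos_le_norm
  let clamp : ℝ → ℝ := fun x => max (-R) (min x R)
  have hclamp : f ∘ clamp = f := by
    funext x
    simp only [Function.comp_apply, clamp]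
    rcases le_or_gt R |x| with hx | hx
    · rw [hfR x hx, hfR]
      rcases le_abs'.mp hx with hx | hx
      · rw [min_eq_left (by linarith), max_eq_left hx, norm_neg, Real.norm_of_nonneg hR.le]
      · rw [min_eq_right hx, max_eq_right (by linarith), Real.norm_of_nonneg hR.le]
    · obtain ⟨h₁, h₂⟩ := abs_lt.mp hx
      rw [min_eq_left h₂.le, max_eq_right h₁.le]
  have hle : eVariationOn (f ∘ clamp) Set.univ ≤ eVariationOn f (Set.Icc (-R) R) :=
    eVariationOn.comp_le_of_monotoneOn f clamp
      ((monotone_const.max (monotone_id.min monotone_const)).monotoneOn _)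
      fun x _ => ⟨le_max_left _ _, max_le (by linarith) (min_le_right _ _)⟩
  rw [hclamp] at hle
  exact ne_top_of_le_ne_top (hf.comp_boundedVariationOn (BoundedVariationOn.id_Icc (-R) R)) hle

theorem low_rank_perturbation_bound_general
    (n : ℕ) (A B : Matrix (Fin n) (Fin n) ℂ)
    (F : ℝ → ℝ) (hFsupp : HasCompactSupport F)
    (hFlip : ∃ L : ℝ, ∀ x y : ℝ, |F x - F y| ≤ L * |x - y|) :
    (1 / (n : ℝ)) * |∑ i : Fin n, (F (singularValues A i) - F (singularValues B i))|
      ≤ totalVar F * (Matrix.rank (A - B) : ℝ) / (n : ℝ) := by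
  obtain ⟨L, hL⟩ := hFlip
  have hF : BoundedVariationOn F Set.univ :=
    (LipschitzWith.of_dist_le' (K := L) fun x y => by simpa only [Real.dist_eq] using hL x y)
      |>.boundedVariationOn_of_hasCompactSupport hFsupp
  set T := Matrix.toEuclideanLin A
  set S := Matrix.toEuclideanLin B
  set r := finrank ℂ (LinearMap.range (T - S))
  have hrank : (A - B).rank = r := by rw [Matrix.rank_eq_finrank_range_toEuclideanLin, map_sub]
  have hrn : r ≤ n := (LinearMap.finrank_range_le _).trans_eq finrank_euclideanSpace_fin
  have hrS : finrank ℂ (LinearMap.range (S - T)) ≤ r := by rw [← neg_sub, LinearMap.range_neg]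
  set M := max (T.singularValues 0) (S.singularValues 0)
  have key := abs_sum_range_sub_le_of_boundedVariationOn hF hrn (m := 0) (M := M)
    (fun k _ => ⟨T.singularValues_nonneg k,
      (T.singularValues_antitone k.zero_le).trans (le_max_left _ _)⟩)
    (fun k _ => ⟨S.singularValues_nonneg k,
      (S.singularValues_antitone k.zero_le).trans (le_max_right _ _)⟩)
    (T.singularValues_add_le_of_finrank_range_sub_le S le_rfl)
    (S.singularValues_add_le_of_finrank_range_sub_le T hrS)
  rw [sum_sub_distrib, sum_comp_singularValues_eq_sum_range, sum_comp_singularValues_eq_sum_range,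
    ← sum_sub_distrib, hrank, one_div_mul_eq_div, totalVar, mul_comm]
  exact div_le_div_of_nonneg_right key n.cast_nonneg

/-- Low-rank perturbations change singular value averages of a Lipschitz,
compactly supported test function by at most the total variation times
rank over dimension. -/
theorem low_rank_perturbation_bound
    (n : ℕ) (A B : Matrix (Fin n) (Fin n) ℂ)
    (F : ℝ → ℝ) (hFcont : Continuous F) (hFsupp : HasCompactSupport F)
    (hFlip : ∃ L : ℝ, ∀ x y : ℝ, |F x - F y| ≤ L * |x - y|) :
    (1 / (n : ℝ)) * |∑ i : Fin n, (F (singularValues A i) - F (singularValues B i))|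
      ≤ totalVar F * (Matrix.rank (A - B) : ℝ) / (n : ℝ) :=
  low_rank_perturbation_bound_general n A B F hFsupp hFlip
end

section
/- Let g(θ) = Σ_{|k|≤d} c_k e^{i k θ} be a complex trigonometric polynomial of degree d ≥ 0, and let F : ℝ → ℝ be a Lipschitz function with Lipschitz constant L and bounded support. Then for every integer n > 2d, |(1/n) Σ_{i=1}^{n} F(|g(2πi/n)|) − (1/(2π)) ∫_0^{2π} F(|g(θ)|) dθ| ≤ πL‖g'‖_∞/n + 4d‖F‖_∞/n. (Equivalently, since for n > 2d the singular values of the n×n circulant matrix C_n(g) associated with g are exactly the values |g(2πi/n)|, i = 1,…,n, the left-hand side equals the deviation of the average of F over the singular values of C_n(g) from the integral.) -/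
open MeasureTheory

/-!
The map `θ ↦ F ‖g θ‖` is Lipschitz with constant `L * ‖g'‖_∞`, and for a `K`-Lipschitz function
the right-endpoint Riemann sum on a cell of width `δ` differs from the integral over that cell by at
most `K δ² / 2`. Summing over the `n` cells of width `2π / n` of `[0, 2π]` and dividing by `2π`
gives the error `π L ‖g'‖_∞ / n`.
-/

open scoped NNReal

namespace LipschitzWith

variable {E : Type*} [NormedAddCommGroup E] [NormedSpace ℝ E] [CompleteSpace E]
  {f : ℝ → E} {K : ℝ≥0}

theorem norm_integral_sub_smul_right_le (hf : LipschitzWith K f) {a b : ℝ} (hab : a ≤ b) :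
    ‖(∫ x in a..b, f x) - (b - a) • f b‖ ≤ K * (b - a) ^ 2 / 2 := by
  have hsub : (∫ x in a..b, f x) - (b - a) • f b = ∫ x in a..b, (f x - f b) := by
    rw [intervalIntegral.integral_sub (hf.continuous.intervalIntegrable _ _)
      intervalIntegrable_const, intervalIntegral.integral_const]
  have hpoint : ∀ x ∈ Set.Ioc a b, ‖f x - f b‖ ≤ K * (b - x) := fun x hx => by
    simpa [← dist_eq_norm, Real.dist_eq, abs_of_nonpos (sub_nonpos.2 hx.2)]
      using hf.dist_le_mul x b
  calc ‖(∫ x in a..b, f x) - (b - a) • f b‖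
      ≤ ∫ x in a..b, (K : ℝ) * (b - x) := by
        rw [hsub]
        exact intervalIntegral.norm_integral_le_of_norm_le hab (.of_forall hpoint)
          ((continuous_const.mul (continuous_const.sub continuous_id)).intervalIntegrable _ _)
    _ = K * (b - a) ^ 2 / 2 := by
        rw [intervalIntegral.integral_const_mul, intervalIntegral.integral_sub
          intervalIntegrable_const intervalIntegral.intervalIntegrable_id, integral_id,
          intervalIntegral.integral_const, smul_eq_mul]
        ring

theorem norm_sum_smul_sub_integral_le (hf : LipschitzWith K f) (a : ℝ) {δ : ℝ} (hδ : 0 ≤ δ)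
    (n : ℕ) :
    ‖∑ i ∈ Finset.Icc 1 n, δ • f (a + i * δ) - ∫ x in a..a + n * δ, f x‖
      ≤ n * (K * δ ^ 2 / 2) := by
  induction n with
  | zero => simp
  | succ n ih =>
    have hsplit := intervalIntegral.integral_add_adjacent_intervals
      (hf.continuous.intervalIntegrable (μ := MeasureTheory.volume) a (a + n * δ))
      (hf.continuous.intervalIntegrable _ (a + (n + 1 : ℕ) * δ))
    have hcell := hf.norm_integral_sub_smul_right_le
      (show a + n * δ ≤ a + (n + 1 : ℕ) * δ by push_cast; linarith)
    rw [show a + (n + 1 : ℕ) * δ - (a + n * δ) = δ by push_cast; ring] at hcell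
    rw [Finset.sum_Icc_succ_top (by omega), ← hsplit]
    calc _ = ‖(∑ i ∈ Finset.Icc 1 n, δ • f (a + i * δ) - ∫ x in a..a + n * δ, f x)
          - ((∫ x in a + n * δ..a + (n + 1 : ℕ) * δ, f x) - δ • f (a + (n + 1 : ℕ) * δ))‖ := by
          congr 1; abel
      _ ≤ n * (K * δ ^ 2 / 2) + K * δ ^ 2 / 2 :=
          (_root_.norm_sub_le _ _).trans (add_le_add ih hcell)
      _ = (n + 1 : ℕ) * (K * δ ^ 2 / 2) := by push_cast; ring

end LipschitzWith

noncomputable def trigPoly (s : Finset ℤ) (c : ℤ → ℂ) (θ : ℝ) : ℂ :=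
  ∑ k ∈ s, c k * Complex.exp (Complex.I * k * θ)

section trigPoly

variable (s : Finset ℤ) (c : ℤ → ℂ)

theorem hasDerivAt_trigPoly (θ : ℝ) :
    HasDerivAt (trigPoly s c) (trigPoly s (fun k => c k * (Complex.I * k)) θ) θ := by
  refine HasDerivAt.fun_sum fun k _ => ?_
  have hlin : HasDerivAt (fun θ : ℝ => Complex.I * k * θ) (Complex.I * k) θ := by
    simpa using ((hasDerivAt_id θ).ofReal_comp).const_mul (Complex.I * k)
  exact (hlin.cexp.const_mul (c k)).congr_deriv (by ring)

theorem nnnorm_trigPoly_le (θ : ℝ) : ‖trigPoly s c θ‖₊ ≤ ∑ k ∈ s, ‖c k‖₊ := by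
  refine (nnnorm_sum_le _ _).trans (Finset.sum_le_sum fun k _ => ?_)
  rw [nnnorm_mul, ← NNReal.coe_le_coe]
  simp [Complex.norm_exp]

theorem lipschitzWith_trigPoly :
    LipschitzWith (⨆ θ, ‖deriv (trigPoly s c) θ‖₊) (trigPoly s c) := by
  have hbdd : BddAbove (Set.range fun θ => ‖deriv (trigPoly s c) θ‖₊) :=
    ⟨_, Set.forall_mem_range.2 fun θ =>
      (hasDerivAt_trigPoly s c θ).deriv ▸ nnnorm_trigPoly_le s _ θ⟩
  exact lipschitzWith_of_nnnorm_deriv_le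
    (fun θ => (hasDerivAt_trigPoly s c θ).differentiableAt) (le_ciSup hbdd)

end trigPoly

theorem circulant_quadrature_bound_general
    (d : ℕ) (c : ℤ → ℂ)
    (g : ℝ → ℂ) (hg : ∀ θ : ℝ, g θ = ∑ k ∈ Finset.Icc (-(d:ℤ)) (d:ℤ), c k * Complex.exp (Complex.I * k * θ))
    (F : ℝ → ℝ) (L : ℝ)
    (hFlip : ∀ x y : ℝ, |F x - F y| ≤ L * |x - y|)
    (n : ℕ) (hn : 2 * d < n) :
    |(1 / (n : ℝ)) * ∑ i ∈ Finset.Icc 1 n, F (‖g (2 * Real.pi * (i : ℝ) / (n : ℝ))‖)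
        - (1 / (2 * Real.pi)) * ∫ θ in (0:ℝ)..(2 * Real.pi), F (‖g θ‖)|
      ≤ Real.pi * L * (⨆ θ : ℝ, ‖deriv g θ‖) / (n : ℝ)
        + 4 * (d : ℝ) * supNorm F / (n : ℝ) := by
  obtain rfl : g = trigPoly (Finset.Icc (-(d:ℤ)) d) c := funext hg
  set s := Finset.Icc (-(d:ℤ)) d
  lift L to ℝ≥0 using by simpa using (abs_nonneg _).trans (hFlip 1 0)
  have hF : LipschitzWith L F :=
    .of_dist_le_mul fun x y => by simpa [Real.dist_eq] using hFlip x y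
  have hφ : LipschitzWith (L * ⨆ θ, ‖deriv (trigPoly s c) θ‖₊) (F ∘ norm ∘ trigPoly s c) := by
    simpa using hF.comp (lipschitzWith_one_norm.comp (lipschitzWith_trigPoly s c))
  have hn0 : (0 : ℝ) < n := by exact_mod_cast (Nat.zero_le _).trans_lt hn
  have hriemann := hφ.norm_sum_smul_sub_integral_le 0 (δ := 2 * Real.pi / n) (by positivity) n
  rw [show 0 + n * (2 * Real.pi / n) = 2 * Real.pi by rw [zero_add]; field_simp] at hriemann
  have hsupNorm : 0 ≤ supNorm F := Real.iSup_nonneg fun _ => abs_nonneg _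
  calc _ = (2 * Real.pi)⁻¹ * ‖∑ i ∈ Finset.Icc 1 n,
          (2 * Real.pi / n) • (F ∘ norm ∘ trigPoly s c) (0 + i * (2 * Real.pi / n))
          - ∫ θ in (0:ℝ)..2 * Real.pi, (F ∘ norm ∘ trigPoly s c) θ‖ := by
        rw [Real.norm_eq_abs, ← abs_of_pos (inv_pos.2 Real.two_pi_pos), ← abs_mul]
        congr 1
        simp only [smul_eq_mul, ← Finset.mul_sum, Function.comp_apply, zero_add]
        field_simp
    _ ≤ (2 * Real.pi)⁻¹ * (n * (↑(L * ⨆ θ, ‖deriv (trigPoly s c) θ‖₊)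
          * (2 * Real.pi / n) ^ 2 / 2)) := by
        gcongr
    _ = Real.pi * L * (⨆ θ : ℝ, ‖deriv (trigPoly s c) θ‖) / n := by
        push_cast [NNReal.coe_iSup, coe_nnnorm]
        field_simp
    _ ≤ _ := le_add_of_nonneg_right (by positivity)

/-- Quadrature-type error bound for the average of a Lipschitz compactly supported
test function over the modulus of a trigonometric polynomial on a uniform grid
(equivalently, over the singular values of the associated circulant matrix). -/
theorem circulant_quadrature_bound
    (d : ℕ) (c : ℤ → ℂ)
    (g : ℝ → ℂ) (hg : ∀ θ : ℝ, g θ = ∑ k ∈ Finset.Icc (-(d:ℤ)) (d:ℤ), c k * Complex.exp (Complex.I * k * θ))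
    (F : ℝ → ℝ) (L : ℝ)
    (hFcont : Continuous F) (hFsupp : HasCompactSupport F)
    (hFlip : ∀ x y : ℝ, |F x - F y| ≤ L * |x - y|)
    (n : ℕ) (hn : 2 * d < n) :
    |(1 / (n : ℝ)) * ∑ i ∈ Finset.Icc 1 n, F (‖g (2 * Real.pi * (i : ℝ) / (n : ℝ))‖)
        - (1 / (2 * Real.pi)) * ∫ θ in (0:ℝ)..(2 * Real.pi), F (‖g θ‖)|
      ≤ Real.pi * L * (⨆ θ : ℝ, ‖deriv g θ‖) / (n : ℝ)
        + 4 * (d : ℝ) * supNorm F / (n : ℝ) :=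
  circulant_quadrature_bound_general d c g hg F L hFlip n hn
end

section
/- Suppose f : ℝ → ℂ is 2π-periodic and k times continuously differentiable for some integer k ≥ 1, and let N ≥ 1 be an integer. Then ‖f − f_N‖_2² ≤ ‖f^{(k)}‖_2² / N^{2k}. -/
open MeasureTheory

/-! Parseval's identity turns both sides into sums of squared Fourier coefficients. The
coefficients of `f - f_N` are those of `f` for `|j| > N` and vanish otherwise, while `k`
integrations by parts, whose boundary terms cancel by periodicity, give `(i j)ᵏ f_j` as the
coefficients of `f⁽ᵏ⁾`. Since `|j|^(2k) ≥ N^(2k)` for `|j| > N`, the inequality holds termwise. -/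

open Real Function intervalIntegral

theorem Function.Periodic.deriv {𝕜 F : Type*} [NontriviallyNormedField 𝕜] [NormedAddCommGroup F]
    [NormedSpace 𝕜 F] {f : 𝕜 → F} {c : 𝕜} (hf : Periodic f c) : Periodic (deriv f) c := fun x => by
  rw [← deriv_comp_add_const, show (fun y => f (y + c)) = f from funext hf]

theorem Function.Periodic.iteratedDeriv {𝕜 F : Type*} [NontriviallyNormedField 𝕜]
    [NormedAddCommGroup F] [NormedSpace 𝕜 F] {f : 𝕜 → F} {c : 𝕜} (hf : Periodic f c) (k : ℕ) :
    Periodic (iteratedDeriv k f) c := by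
  induction k with
  | zero => simpa
  | succ k ih => simpa only [iteratedDeriv_succ] using ih.deriv

theorem fourierCoeffOn_comp_coe {E : Type*} [NormedAddCommGroup E] [NormedSpace ℂ E] {a b : ℝ}
    (hab : a < b) [Fact (0 < b - a)] (F : AddCircle (b - a) → E) :
    fourierCoeffOn hab (fun x => F x) = fourierCoeff F := by
  have : AddCircle.liftIoc (b - a) a (fun x => F x) = F := by
    ext x
    simp [AddCircle.liftIoc]
  ext n
  rw [fourierCoeffOn, this]

theorem fourierCoeffOn_deriv {a b : ℝ} (hab : a < b) {g : ℝ → ℂ} (hg : Differentiable ℝ g)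
    (hg' : IntervalIntegrable (deriv g) volume a b) (hgab : g a = g b) (n : ℤ) :
    fourierCoeffOn hab (deriv g) n = 2 * π * Complex.I * n / (b - a) * fourierCoeffOn hab g n := by
  rcases eq_or_ne n 0 with rfl | hn
  · rw [fourierCoeffOn_eq_integral]
    simp [integral_deriv_eq_sub (fun x _ => hg x) hg', hgab]
  · have key := fourierCoeffOn_of_hasDerivAt hab hn (fun x _ => (hg x).hasDerivAt) hg'
    rw [hgab, sub_self, mul_zero, zero_sub] at key
    have hba : (b : ℂ) - a ≠ 0 := sub_ne_zero.2 (by exact_mod_cast hab.ne')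
    have hn' : (n : ℂ) ≠ 0 := by exact_mod_cast hn
    rw [key]
    field_simp

theorem fourierCoeffOn_iteratedDeriv {a b : ℝ} (hab : a < b) {k : ℕ} {g : ℝ → ℂ}
    (hg : ContDiff ℝ k g) (hper : Periodic g (b - a)) (n : ℤ) :
    fourierCoeffOn hab (iteratedDeriv k g) n
      = (2 * π * Complex.I * n / (b - a)) ^ k * fourierCoeffOn hab g n := by
  induction k generalizing g with
  | zero => simp
  | succ k ih =>
    have hgab : g a = g b := by simpa using (hper a).symm
    rw [iteratedDeriv_succ', ih hg.deriv' hper.deriv,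
      fourierCoeffOn_deriv hab (hg.differentiable (by simp))
        ((hg.continuous_deriv (by simp)).intervalIntegrable a b) hgab]
    ring

theorem neg_pi_lt_pi : -π < π := by linarith [pi_pos]

theorem fourier_coe_eq_exp (n : ℤ) (x : ℝ) :
    fourier n (x : AddCircle (π - -π)) = Complex.exp (Complex.I * n * x) := by
  rw [fourier_coe_apply]
  congr 1
  have : (π : ℂ) ≠ 0 := by exact_mod_cast pi_ne_zero
  push_cast
  field_simp
  ring

theorem fCoeff_eq_fourierCoeffOn (f : ℝ → ℂ) (n : ℤ) :
    fCoeff f n = fourierCoeffOn neg_pi_lt_pi f n := by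
  rw [fCoeff, fourierCoeffOn_eq_integral]
  simp_rw [fourier_coe_eq_exp, smul_eq_mul, Complex.real_smul]
  push_cast
  congr 1
  · ring
  · congr 1
    ext x
    ring_nf

theorem fCoeff_exp (m n : ℤ) :
    fCoeff (fun x => Complex.exp (Complex.I * m * x)) n = (Pi.single m 1 : ℤ → ℂ) n := by
  have : Fact (0 < π - -π) := ⟨sub_pos.2 neg_pi_lt_pi⟩
  simp_rw [fCoeff_eq_fourierCoeffOn, ← fourier_coe_eq_exp, fourierCoeffOn_comp_coe,
    fourierCoeff_fourier]

theorem fCoeff_const_mul (c : ℂ) (f : ℝ → ℂ) (n : ℤ) :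
    fCoeff (fun x => c * f x) n = c * fCoeff f n := by
  simp_rw [fCoeff_eq_fourierCoeffOn, fourierCoeffOn.const_mul]

theorem fCoeff_sub {f g : ℝ → ℂ} (hf : IntervalIntegrable f volume (-π) π)
    (hg : IntervalIntegrable g volume (-π) π) (n : ℤ) :
    fCoeff (fun x => f x - g x) n = fCoeff f n - fCoeff g n := by
  have hexp : ContinuousOn (fun x : ℝ => Complex.exp (-(Complex.I * n * x))) (Set.uIcc (-π) π) :=
    by fun_prop
  simp only [fCoeff, sub_mul]
  rw [integral_sub (hf.mul_continuousOn hexp) (hg.mul_continuousOn hexp), mul_sub]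

theorem fCoeff_finset_sum {ι : Type*} (s : Finset ι) {g : ι → ℝ → ℂ}
    (hg : ∀ i ∈ s, IntervalIntegrable (g i) volume (-π) π) (n : ℤ) :
    fCoeff (fun x => ∑ i ∈ s, g i x) n = ∑ i ∈ s, fCoeff (g i) n := by
  have hexp : ContinuousOn (fun x : ℝ => Complex.exp (-(Complex.I * n * x))) (Set.uIcc (-π) π) :=
    by fun_prop
  simp only [fCoeff, Finset.sum_mul]
  rw [integral_finsetSum fun i hi => (hg i hi).mul_continuousOn hexp, Finset.mul_sum]

theorem continuous_truncFourier (f : ℝ → ℂ) (N : ℕ) : Continuous (truncFourier f N) := by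
  unfold truncFourier
  fun_prop

theorem truncFourier_periodic (f : ℝ → ℂ) (N : ℕ) : Periodic (truncFourier f N) (2 * π) := by
  intro x
  simp only [truncFourier, ← fourier_coe_eq_exp, two_mul, ← sub_neg_eq_add π π,
    AddCircle.coe_add_period]

theorem fCoeff_truncFourier (f : ℝ → ℂ) (N : ℕ) (n : ℤ) :
    fCoeff (truncFourier f N) n = if n ∈ Finset.Icc (-(N : ℤ)) N then fCoeff f n else 0 := by
  unfold truncFourier
  rw [fCoeff_finset_sum _ fun j _ => by apply Continuous.intervalIntegrable; fun_prop]
  simp_rw [fCoeff_const_mul, fCoeff_exp, Pi.single_apply, mul_ite, mul_one, mul_zero]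
  exact Finset.sum_ite_eq _ _ _

theorem fCoeff_sub_truncFourier {f : ℝ → ℂ} (hf : IntervalIntegrable f volume (-π) π)
    (N : ℕ) (n : ℤ) :
    fCoeff (fun x => f x - truncFourier f N x) n
      = if n ∈ Finset.Icc (-(N : ℤ)) N then 0 else fCoeff f n := by
  rw [fCoeff_sub hf ((continuous_truncFourier f N).intervalIntegrable _ _), fCoeff_truncFourier]
  split_ifs <;> simp

theorem sq_l2Norm (g : ℝ → ℂ) : l2Norm g ^ 2 = ∫ x in (0 : ℝ)..2 * π, ‖g x‖ ^ 2 :=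
  Real.sq_sqrt (integral_nonneg (by positivity) fun x _ => by positivity)

theorem hasSum_sq_norm_fCoeff {g : ℝ → ℂ} (hg : Continuous g) (hper : Periodic g (2 * π)) :
    HasSum (fun n : ℤ => ‖fCoeff g n‖ ^ 2) (l2Norm g ^ 2 / (2 * π)) := by
  have hL2 : MemLp g 2 (volume.restrict (Set.Ioc (-π) π)) := by
    rw [memLp_two_iff_integrable_sq_norm hg.aestronglyMeasurable]
    exact (hg.norm.pow 2).integrableOn_Ioc
  have hshift := (hper.comp fun z => ‖z‖ ^ 2).intervalIntegral_add_eq 0 (-π)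
  simp only [comp_apply, zero_add, show -π + 2 * π = π by ring] at hshift
  simp_rw [fCoeff_eq_fourierCoeffOn]
  rw [sq_l2Norm, hshift, div_eq_inv_mul, two_mul, ← sub_neg_eq_add]
  exact hasSum_sq_fourierCoeffOn neg_pi_lt_pi hL2

theorem norm_fCoeff_iteratedDeriv {f : ℝ → ℂ} {k : ℕ} (hf : ContDiff ℝ k f)
    (hper : Periodic f (2 * π)) (n : ℤ) :
    ‖fCoeff (iteratedDeriv k f) n‖ = |(n : ℝ)| ^ k * ‖fCoeff f n‖ := by
  have hper' : Periodic f (π - -π) := by rwa [sub_neg_eq_add, ← two_mul]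
  have hfactor : 2 * π * Complex.I * n / ((π : ℂ) - ((-π : ℝ) : ℂ)) = Complex.I * n := by
    have : (π : ℂ) ≠ 0 := by exact_mod_cast pi_ne_zero
    push_cast
    field_simp
    ring
  simp_rw [fCoeff_eq_fourierCoeffOn, fourierCoeffOn_iteratedDeriv neg_pi_lt_pi hf hper' n]
  rw [hfactor, norm_mul, norm_pow, norm_mul, Complex.norm_I, one_mul, Complex.norm_intCast]

theorem sq_norm_fCoeff_sub_truncFourier_le {f : ℝ → ℂ} {k N : ℕ} (hf : ContDiff ℝ k f)
    (hper : Periodic f (2 * π)) (hN : 1 ≤ N) (n : ℤ) :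
    ‖fCoeff (fun x => f x - truncFourier f N x) n‖ ^ 2
      ≤ ‖fCoeff (iteratedDeriv k f) n‖ ^ 2 / (N : ℝ) ^ (2 * k) := by
  rw [fCoeff_sub_truncFourier (hf.continuous.intervalIntegrable _ _),
    norm_fCoeff_iteratedDeriv hf hper]
  split_ifs with hn
  · rw [norm_zero, zero_pow two_ne_zero]
    positivity
  · have hNn : (N : ℝ) ≤ |(n : ℝ)| := by
      rw [Finset.mem_Icc, not_and_or, not_le, not_le] at hn
      rw [← Int.cast_abs, ← Int.cast_natCast, Int.cast_le, le_abs]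
      omega
    rw [le_div_iff₀ (by positivity), mul_pow, ← pow_mul, mul_comm k 2, mul_comm]
    gcongr

theorem fourier_truncation_l2_bound_general
    (f : ℝ → ℂ) (k : ℕ)
    (hper : Function.Periodic f (2 * Real.pi))
    (hf : ContDiff ℝ (k : ℕ∞) f)
    (N : ℕ) (hN : 1 ≤ N) :
    l2Norm (fun x => f x - truncFourier f N x) ^ 2
      ≤ l2Norm (iteratedDeriv k f) ^ 2 / (N : ℝ) ^ (2 * k) := by
  have herror := hasSum_sq_norm_fCoeff (hf.continuous.sub (continuous_truncFourier f N))
    (hper.sub (truncFourier_periodic f N))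
  have hderiv := hasSum_sq_norm_fCoeff (hf.continuous_iteratedDeriv k le_rfl)
    (hper.iteratedDeriv k)
  have := hasSum_le (sq_norm_fCoeff_sub_truncFourier_le hf hper hN) herror (hderiv.div_const _)
  rwa [div_right_comm, div_le_div_iff_of_pos_right (by positivity)] at this

/-- L² error of the truncated Fourier series of a `C^k` periodic function. -/
theorem fourier_truncation_l2_bound
    (f : ℝ → ℂ) (k : ℕ) (hk : 1 ≤ k)
    (hper : Function.Periodic f (2 * Real.pi))
    (hf : ContDiff ℝ (k : ℕ∞) f)
    (N : ℕ) (hN : 1 ≤ N) :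
    l2Norm (fun x => f x - truncFourier f N x) ^ 2
      ≤ l2Norm (iteratedDeriv k f) ^ 2 / (N : ℝ) ^ (2 * k) :=
  fourier_truncation_l2_bound_general f k hper hf N hN
end

section
/- Let f : [−π,π] → ℂ be in L^p([−π,π]) for some p ∈ [1,∞). Then for every n ∈ ℕ, the Schatten p-norm of the n-th Toeplitz matrix generated by f satisfies ( Σ_{i=1}^{n} σ_i(T_n(f))^p )^{1/p} ≤ (n/(2π))^{1/p} · ( ∫_{−π}^{π} |f(x)|^p dx )^{1/p}. -/
open MeasureTheory

/-!
Write `e(x) = (e^{-ikx})_{k<n}` and let `σ_k, u_k, w_k` be the singular values and left and right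
singular vectors of `T = T_n(f)`. Since `T = (2π)⁻¹ ∫ f(x) e(x) e(x)ᴴ dx`, we get
`2π σ_k = 2π ⟪u_k, T w_k⟫ ≤ ∫ |f| g_k` for the weight `g_k = |⟪u_k, e⟫| |⟪e, w_k⟫|`.
By AM-GM and Parseval `∫ g_k ≤ 2π`, so Jensen's inequality for `t ↦ t^p` gives
`2π σ_k^p ≤ ∫ |f|^p g_k`. Summing over `k`, AM-GM and Bessel's inequality give
`∑_k g_k(x) ≤ ‖e(x)‖² = n`, hence `2π ∑_k σ_k^p ≤ n ∫ |f|^p`.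
-/

open Complex Real Set
open scoped InnerProductSpace

/-- The tangent line of the convex function `t ↦ t ^ p` at `b` lies below its graph. -/
theorem Real.mul_rpow_sub_one_mul_le {a b p : ℝ} (ha : 0 ≤ a) (hb : 0 ≤ b) (hp : 1 ≤ p) :
    p * (b ^ (p - 1) * a) ≤ a ^ p + (p - 1) * b ^ p := by
  have hp0 : 0 < p := by linarith
  have key := Real.geom_mean_le_arith_mean2_weighted (w₁ := 1 / p) (w₂ := 1 - 1 / p)
    (by positivity) (by rw [sub_nonneg, div_le_one hp0]; exact hp)
    (Real.rpow_nonneg ha p) (Real.rpow_nonneg hb p) (by ring)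
  rw [← Real.rpow_mul ha, ← Real.rpow_mul hb, mul_one_div_cancel hp0.ne', Real.rpow_one,
    show p * (1 - 1 / p) = p - 1 by field_simp] at key
  calc p * (b ^ (p - 1) * a) = p * (a * b ^ (p - 1)) := by ring
    _ ≤ p * (1 / p * a ^ p + (1 - 1 / p) * b ^ p) := by gcongr
    _ = a ^ p + (p - 1) * b ^ p := by field_simp

/-- Jensen's inequality for `t ↦ t ^ p` and a weight `g` of total mass at most `C`, obtained by
integrating the tangent line at `σ` against `g`. -/
theorem MeasureTheory.mul_rpow_le_integral_rpow_mul {α : Type*} [MeasurableSpace α]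
    {μ : Measure α} {F g : α → ℝ} {σ C p : ℝ} (hF : 0 ≤ F) (hg : 0 ≤ g) (hσ : 0 ≤ σ)
    (hp : 1 ≤ p) (hFg : Integrable (fun x => F x * g x) μ)
    (hFpg : Integrable (fun x => F x ^ p * g x) μ) (hgi : Integrable g μ)
    (hmass : ∫ x, g x ∂μ ≤ C) (hσC : C * σ ≤ ∫ x, F x * g x ∂μ) :
    C * σ ^ p ≤ ∫ x, F x ^ p * g x ∂μ := by
  have tangent : p * σ ^ (p - 1) * ∫ x, F x * g x ∂μ
      ≤ (∫ x, F x ^ p * g x ∂μ) + (p - 1) * σ ^ p * ∫ x, g x ∂μ := by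
    rw [← integral_const_mul, ← integral_const_mul, ← integral_add hFpg (hgi.const_mul _)]
    refine integral_mono (hFg.const_mul _) (hFpg.add (hgi.const_mul _)) fun x => ?_
    have := mul_le_mul_of_nonneg_right (Real.mul_rpow_sub_one_mul_le (hF x) hσ hp) (hg x)
    simp only
    nlinarith
  have hσp : σ ^ (p - 1) * σ = σ ^ p := by
    rcases hσ.eq_or_lt with rfl | hσ
    · rw [mul_zero, Real.zero_rpow (by linarith)]
    · rw [Real.rpow_sub_one hσ.ne', div_mul_cancel₀ _ hσ.ne']
  calc C * σ ^ p = p * σ ^ (p - 1) * (C * σ) - (p - 1) * σ ^ p * C := by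
        rw [← hσp]; ring
    _ ≤ p * σ ^ (p - 1) * (∫ x, F x * g x ∂μ) - (p - 1) * σ ^ p * ∫ x, g x ∂μ := by
        gcongr
    _ ≤ ∫ x, F x ^ p * g x ∂μ := by linarith

theorem Orthonormal.sum_norm_inner_sq_le_of_eq_zero {ι 𝕜 E : Type*} [Fintype ι] [RCLike 𝕜]
    [NormedAddCommGroup E] [InnerProductSpace 𝕜 E] {p : ι → Prop} [DecidablePred p] {v : ι → E}
    (hv : Orthonormal 𝕜 fun i : {i // p i} => v i) (hv0 : ∀ i, ¬ p i → v i = 0) (x : E) :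
    ∑ i, ‖⟪v i, x⟫_𝕜‖ ^ 2 ≤ ‖x‖ ^ 2 := by
  calc ∑ i, ‖⟪v i, x⟫_𝕜‖ ^ 2 = ∑ i with p i, ‖⟪v i, x⟫_𝕜‖ ^ 2 :=
        (Finset.sum_filter_of_ne fun i _ hi => not_not.mp fun h => hi (by simp [hv0 i h])).symm
    _ = ∑ i : {i // p i}, ‖⟪v i, x⟫_𝕜‖ ^ 2 := Finset.sum_subtype _ (by simp) _
    _ ≤ ‖x‖ ^ 2 := hv.sum_inner_products_le x

section SingularVectors

variable {n : ℕ} (A : Matrix (Fin n) (Fin n) ℂ)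

noncomputable def rightSingularBasis : OrthonormalBasis (Fin n) ℂ (EuclideanSpace ℂ (Fin n)) :=
  (Matrix.isHermitian_conjTranspose_mul_self A).eigenvectorBasis

/-- `A w_k / σ_k`; since `0⁻¹ = 0` this is `0` when `σ_k = 0`. -/
noncomputable def leftSingularVector (k : Fin n) : EuclideanSpace ℂ (Fin n) :=
  (singularValues A k : ℂ)⁻¹ • Matrix.toEuclideanLin A (rightSingularBasis A k)

theorem singularValues_nonneg (k : Fin n) : 0 ≤ singularValues A k := Real.sqrt_nonneg _

theorem inner_toEuclideanLin_rightSingularBasis (k l : Fin n) :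
    ⟪Matrix.toEuclideanLin A (rightSingularBasis A k),
      Matrix.toEuclideanLin A (rightSingularBasis A l)⟫_ℂ
      = if k = l then (singularValues A k : ℂ) ^ 2 else 0 := by
  have hA := Matrix.isHermitian_conjTranspose_mul_self A
  rw [← LinearMap.adjoint_inner_right, ← Matrix.toEuclideanLin_conjTranspose_eq_adjoint,
    ← LinearMap.comp_apply, ← Matrix.toLpLin_mul_same, Matrix.toLpLin_apply, rightSingularBasis,
    hA.mulVec_eigenvectorBasis, WithLp.toLp_smul, WithLp.toLp_ofLp, inner_smul_right_eq_smul,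
    orthonormal_iff_ite.mp hA.eigenvectorBasis.orthonormal k l]
  split_ifs with h
  · subst h
    rw [singularValues, ← Complex.ofReal_pow,
      Real.sq_sqrt (Matrix.eigenvalues_conjTranspose_mul_self_nonneg A k)]
    simp
  · simp

theorem inner_leftSingularVector_toEuclideanLin (k : Fin n) :
    ⟪leftSingularVector A k, Matrix.toEuclideanLin A (rightSingularBasis A k)⟫_ℂ
      = singularValues A k := by
  rw [leftSingularVector, inner_smul_left, inner_toEuclideanLin_rightSingularBasis, if_pos rfl]
  rcases eq_or_ne (singularValues A k) 0 with h | h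
  · simp [h]
  · rw [map_inv₀, Complex.conj_ofReal]
    field_simp

theorem leftSingularVector_eq_zero {k : Fin n} (hk : singularValues A k = 0) :
    leftSingularVector A k = 0 := by
  simp [leftSingularVector, hk]

theorem orthonormal_leftSingularVector :
    Orthonormal ℂ fun k : {k // singularValues A k ≠ 0} => leftSingularVector A k := by
  rw [orthonormal_iff_ite]
  rintro ⟨k, hk⟩ ⟨l, -⟩
  simp only [leftSingularVector, inner_smul_left, inner_smul_right,
    inner_toEuclideanLin_rightSingularBasis, Subtype.mk.injEq]
  split_ifs with h
  · subst h
    rw [map_inv₀, Complex.conj_ofReal]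
    field_simp
    exact div_self (by exact_mod_cast hk)
  · simp

theorem norm_leftSingularVector_le_one (k : Fin n) : ‖leftSingularVector A k‖ ≤ 1 := by
  by_cases hk : singularValues A k = 0
  · simp [leftSingularVector_eq_zero A hk]
  · exact ((orthonormal_leftSingularVector A).1 ⟨k, hk⟩).le

end SingularVectors

theorem integral_exp_neg_int_mul_I (m : ℤ) :
    ∫ x in -π..π, exp (-(I * m * x)) = if m = 0 then 2 * (π : ℂ) else 0 := by
  split_ifs with hm
  · simp only [hm, Int.cast_zero, mul_zero, zero_mul, neg_zero, Complex.exp_zero,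
      intervalIntegral.integral_const, sub_neg_eq_add, real_smul, ofReal_add, mul_one]
    ring
  · have hc : -(I * m) ≠ 0 := by simpa using hm
    simp_rw [show ∀ x : ℝ, -(I * m * x) = -(I * m) * x from fun x => by ring]
    rw [integral_exp_mul_complex hc, div_eq_zero_iff, sub_eq_zero, exp_eq_exp_iff_exists_int]
    exact Or.inl ⟨-m, by push_cast; ring⟩

theorem fCoeff_one (m : ℤ) : fCoeff (fun _ => 1) m = if m = 0 then 1 else 0 := by
  simp only [fCoeff, one_mul, integral_exp_neg_int_mul_I]
  split_ifs
  · field_simp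
  · simp

theorem toeplitzMat_one (n : ℕ) : toeplitzMat (fun _ => 1) n = 1 := by
  ext i j
  simp [toeplitzMat, fCoeff_one, Matrix.one_apply, sub_eq_zero, Fin.val_inj]

noncomputable def fourierVec (n : ℕ) (x : ℝ) : EuclideanSpace ℂ (Fin n) :=
  WithLp.toLp 2 fun k => exp (-(I * (k : ℕ) * x))

@[fun_prop]
theorem continuous_fourierVec (n : ℕ) : Continuous (fourierVec n) :=
  (PiLp.continuous_toLp 2 _).comp (by fun_prop)

theorem norm_fourierVec_sq (n : ℕ) (x : ℝ) : ‖fourierVec n x‖ ^ 2 = n := by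
  have h : ∀ k : Fin n, ‖exp (-(I * (k : ℕ) * x))‖ = 1 := fun k => by
    rw [norm_exp]
    simp
  simp [EuclideanSpace.norm_sq_eq, fourierVec, h]

theorem inner_mul_inner_fourierVec {n : ℕ} (u w : EuclideanSpace ℂ (Fin n)) (x : ℝ) :
    ⟪u, fourierVec n x⟫_ℂ * ⟪fourierVec n x, w⟫_ℂ
      = ∑ i, ∑ j, (starRingEnd ℂ) (u i) * w j
          * exp (-(I * ((((i : ℕ) : ℤ) - ((j : ℕ) : ℤ) : ℤ) : ℂ) * x)) := by
  simp only [PiLp.inner_apply, fourierVec, RCLike.inner_apply, Finset.sum_mul_sum]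
  refine Finset.sum_congr rfl fun i _ => Finset.sum_congr rfl fun j _ => ?_
  rw [← exp_conj]
  calc _ = (starRingEnd ℂ) (u i) * w j
        * (exp (-(I * (i : ℕ) * x)) * exp ((starRingEnd ℂ) (-(I * (j : ℕ) * x)))) := by ring
    _ = _ := by
      rw [← Complex.exp_add]
      congr 2
      simp only [map_neg, map_mul, conj_I, conj_natCast, conj_ofReal]
      push_cast
      ring

theorem inner_toeplitzMat_mulVec {f : ℝ → ℂ} (hf : IntegrableOn f (Ioc (-π) π)) {n : ℕ}
    (u w : EuclideanSpace ℂ (Fin n)) :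
    ⟪u, Matrix.toEuclideanLin (toeplitzMat f n) w⟫_ℂ
      = 1 / (2 * π) * ∫ x in Ioc (-π) π, f x * (⟪u, fourierVec n x⟫_ℂ * ⟪fourierVec n x, w⟫_ℂ) := by
  have hint : ∀ m : ℤ, IntegrableOn (fun x => f x * exp (-(I * m * x))) (Ioc (-π) π) :=
    fun m => hf.mul_continuousOn_of_subset (by fun_prop) measurableSet_Ioc isCompact_Icc
      Ioc_subset_Icc_self
  simp_rw [inner_mul_inner_fourierVec, Finset.mul_sum, mul_left_comm (f _)]
  rw [integral_finsetSum _ fun i _ => integrable_finsetSum _ fun j _ => (hint _).const_mul _]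
  simp_rw [integral_finsetSum _ fun j _ => (hint _).const_mul _, integral_const_mul, Finset.mul_sum]
  simp only [EuclideanSpace.inner_eq_star_dotProduct, Matrix.ofLp_toLpLin, Matrix.toLin'_apply,
    Matrix.mulVec, dotProduct, toeplitzMat, fCoeff, Matrix.of_apply,
    intervalIntegral.integral_of_le (neg_le_self pi_pos.le), Finset.sum_mul]
  refine Finset.sum_congr rfl fun i _ => Finset.sum_congr rfl fun j _ => ?_
  simp only [Pi.star_apply, RCLike.star_def]
  ring

/-- Parseval's identity: the case `f = 1` of `inner_toeplitzMat_mulVec`, as `T_n(1) = 1`. -/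
theorem integral_norm_inner_fourierVec_sq {n : ℕ} (v : EuclideanSpace ℂ (Fin n)) :
    ∫ x in Ioc (-π) π, ‖⟪v, fourierVec n x⟫_ℂ‖ ^ 2 = 2 * π * ‖v‖ ^ 2 := by
  have hpt : ∀ x, (1 : ℂ) * (⟪v, fourierVec n x⟫_ℂ * ⟪fourierVec n x, v⟫_ℂ)
      = ((‖⟪v, fourierVec n x⟫_ℂ‖ ^ 2 : ℝ) : ℂ) := fun x => by
    rw [one_mul, ← inner_conj_symm (fourierVec n x) v, mul_conj, normSq_eq_norm_sq]
  have h := inner_toeplitzMat_mulVec (f := fun _ => 1) (integrableOn_const (by simp)) v v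
  simp only [toeplitzMat_one, Matrix.toLpLin_one, LinearMap.id_apply, inner_self_eq_norm_sq_to_K,
    hpt] at h
  rw [integral_complex_ofReal] at h
  have h' : ‖v‖ ^ 2 = 1 / (2 * π) * ∫ x in Ioc (-π) π, ‖⟪v, fourierVec n x⟫_ℂ‖ ^ 2 := by
    apply Complex.ofReal_injective
    push_cast
    exact h
  rw [h']
  field_simp

section SingularWeight

variable {n : ℕ}

noncomputable def singularWeight (A : Matrix (Fin n) (Fin n) ℂ) (k : Fin n) (x : ℝ) : ℝ :=
  ‖⟪leftSingularVector A k, fourierVec n x⟫_ℂ‖ * ‖⟪fourierVec n x, rightSingularBasis A k⟫_ℂ‖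

variable (A : Matrix (Fin n) (Fin n) ℂ)

theorem singularWeight_nonneg (k : Fin n) (x : ℝ) : 0 ≤ singularWeight A k x := by
  unfold singularWeight
  positivity

theorem continuous_singularWeight (k : Fin n) : Continuous (singularWeight A k) := by
  unfold singularWeight
  fun_prop

theorem two_mul_singularWeight_le (k : Fin n) (x : ℝ) :
    2 * singularWeight A k x
      ≤ ‖⟪leftSingularVector A k, fourierVec n x⟫_ℂ‖ ^ 2
        + ‖⟪rightSingularBasis A k, fourierVec n x⟫_ℂ‖ ^ 2 := by
  rw [singularWeight, norm_inner_symm (fourierVec n x), ← mul_assoc]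
  exact two_mul_le_add_sq _ _

theorem sum_singularWeight_le (x : ℝ) : ∑ k, singularWeight A k x ≤ n := by
  have hu := (orthonormal_leftSingularVector A).sum_norm_inner_sq_le_of_eq_zero
    (fun k hk => leftSingularVector_eq_zero A (not_not.mp hk)) (fourierVec n x)
  have hw := (rightSingularBasis A).orthonormal.sum_inner_products_le (s := Finset.univ)
    (fourierVec n x)
  rw [norm_fourierVec_sq] at hu hw
  have := Finset.sum_le_sum (s := Finset.univ) fun k _ => two_mul_singularWeight_le A k x
  rw [← Finset.mul_sum, Finset.sum_add_distrib] at this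
  linarith

theorem singularWeight_le_card (k : Fin n) (x : ℝ) : singularWeight A k x ≤ n :=
  (Finset.single_le_sum (fun l _ => singularWeight_nonneg A l x) (Finset.mem_univ k)).trans
    (sum_singularWeight_le A x)

theorem integral_singularWeight_le (k : Fin n) :
    ∫ x in Ioc (-π) π, singularWeight A k x ≤ 2 * π := by
  have hsq : ∀ v : EuclideanSpace ℂ (Fin n),
      IntegrableOn (fun x => ‖⟪v, fourierVec n x⟫_ℂ‖ ^ 2) (Ioc (-π) π) := fun v =>
    Continuous.integrableOn_Ioc (by fun_prop)
  have h := integral_mono ((continuous_singularWeight A k).integrableOn_Ioc.const_mul 2)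
    ((hsq _).add (hsq _)) (two_mul_singularWeight_le A k)
  rw [Pi.add_def, integral_const_mul, integral_add (hsq _) (hsq _),
    integral_norm_inner_fourierVec_sq, integral_norm_inner_fourierVec_sq,
    (rightSingularBasis A).orthonormal.1 k] at h
  have hu : ‖leftSingularVector A k‖ ^ 2 ≤ 1 :=
    pow_le_one₀ (norm_nonneg _) (norm_leftSingularVector_le_one A k)
  nlinarith [pi_pos]

theorem integrableOn_mul_singularWeight {h : ℝ → ℝ}
    (hh : IntegrableOn h (Ioc (-π) π)) (k : Fin n) :
    IntegrableOn (fun x => h x * singularWeight A k x) (Ioc (-π) π) :=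
  hh.mul_bdd (continuous_singularWeight A k).aestronglyMeasurable <| ae_of_all _ fun x => by
    rw [Real.norm_of_nonneg (singularWeight_nonneg A k x)]
    exact singularWeight_le_card A k x

end SingularWeight

section ToeplitzSingularValues

variable {f : ℝ → ℂ} {n : ℕ}

theorem two_pi_mul_singularValues_toeplitzMat_le (hf : IntegrableOn f (Ioc (-π) π)) (k : Fin n) :
    2 * π * singularValues (toeplitzMat f n) k
      ≤ ∫ x in Ioc (-π) π, ‖f x‖ * singularWeight (toeplitzMat f n) k x := by
  set A := toeplitzMat f n
  have h := inner_toeplitzMat_mulVec hf (leftSingularVector A k) (rightSingularBasis A k)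
  rw [inner_leftSingularVector_toEuclideanLin] at h
  calc 2 * π * singularValues A k = ‖(2 * π : ℂ) * singularValues A k‖ := by
        rw [norm_mul, norm_real, Real.norm_of_nonneg (singularValues_nonneg A k)]
        norm_cast
        rw [Real.norm_of_nonneg two_pi_pos.le]
    _ = ‖∫ x in Ioc (-π) π, f x * (⟪leftSingularVector A k, fourierVec n x⟫_ℂ
          * ⟪fourierVec n x, rightSingularBasis A k⟫_ℂ)‖ := by
        rw [h, ← mul_assoc, mul_one_div_cancel (by exact_mod_cast two_pi_pos.ne'), one_mul]
    _ ≤ _ := norm_integral_le_integral_norm _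
    _ = _ := by simp only [norm_mul, singularWeight]

variable {p : ℝ}

theorem two_pi_mul_rpow_singularValues_toeplitzMat_le (hp : 1 ≤ p)
    (hf : IntegrableOn f (Ioc (-π) π)) (hfp : IntegrableOn (fun x => ‖f x‖ ^ p) (Ioc (-π) π))
    (k : Fin n) :
    2 * π * singularValues (toeplitzMat f n) k ^ p
      ≤ ∫ x in Ioc (-π) π, ‖f x‖ ^ p * singularWeight (toeplitzMat f n) k x :=
  mul_rpow_le_integral_rpow_mul (fun x => norm_nonneg (f x)) (singularWeight_nonneg _ k)
    (singularValues_nonneg _ k) hp (integrableOn_mul_singularWeight _ hf.norm k)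
    (integrableOn_mul_singularWeight _ hfp k)
    (continuous_singularWeight _ k).integrableOn_Ioc (integral_singularWeight_le _ k)
    (two_pi_mul_singularValues_toeplitzMat_le hf k)

theorem sum_rpow_singularValues_toeplitzMat_le (hp : 1 ≤ p)
    (hf : IntegrableOn f (Ioc (-π) π)) (hfp : IntegrableOn (fun x => ‖f x‖ ^ p) (Ioc (-π) π)) :
    ∑ k, singularValues (toeplitzMat f n) k ^ p
      ≤ n / (2 * π) * ∫ x in Ioc (-π) π, ‖f x‖ ^ p := by
  set A := toeplitzMat f n
  have hterm := integrableOn_mul_singularWeight A hfp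
  have key : 2 * π * ∑ k, singularValues A k ^ p ≤ n * ∫ x in Ioc (-π) π, ‖f x‖ ^ p :=
    calc 2 * π * ∑ k, singularValues A k ^ p
        ≤ ∑ k, ∫ x in Ioc (-π) π, ‖f x‖ ^ p * singularWeight A k x := by
          rw [Finset.mul_sum]
          exact Finset.sum_le_sum fun k _ =>
            two_pi_mul_rpow_singularValues_toeplitzMat_le hp hf hfp k
      _ = ∫ x in Ioc (-π) π, ‖f x‖ ^ p * ∑ k, singularWeight A k x := by
          simp_rw [Finset.mul_sum]
          exact (integral_finsetSum _ fun k _ => hterm k).symm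
      _ ≤ ∫ x in Ioc (-π) π, ‖f x‖ ^ p * n :=
          integral_mono
            (by simpa only [Finset.mul_sum] using integrable_finsetSum _ fun k _ => hterm k)
            (hfp.mul_const _) fun x =>
              mul_le_mul_of_nonneg_left (sum_singularWeight_le A x) (by positivity)
      _ = n * ∫ x in Ioc (-π) π, ‖f x‖ ^ p := by rw [integral_mul_const, mul_comm]
  rw [div_mul_eq_mul_div, le_div_iff₀ two_pi_pos]
  linarith

end ToeplitzSingularValues

/-- Schatten p-norm bound of a Toeplitz matrix in terms of the Lᵖ norm of its symbol. -/
theorem toeplitz_schatten_norm_bound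
    (f : ℝ → ℂ) (p : ℝ) (hp : 1 ≤ p)
    (hf : MeasureTheory.MemLp f (ENNReal.ofReal p)
            (MeasureTheory.volume.restrict (Set.Icc (-Real.pi) Real.pi)))
    (n : ℕ) :
    (∑ i : Fin n, singularValues (toeplitzMat f n) i ^ p) ^ (1 / p)
      ≤ ((n : ℝ) / (2 * Real.pi)) ^ (1 / p)
          * (∫ x in (-Real.pi)..Real.pi, ‖f x‖ ^ p) ^ (1 / p) := by
  have hf' : MemLp f (ENNReal.ofReal p) (volume.restrict (Ioc (-π) π)) :=
    hf.mono_measure (Measure.restrict_mono Ioc_subset_Icc_self le_rfl)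
  have hfp : IntegrableOn (fun x => ‖f x‖ ^ p) (Ioc (-π) π) := by
    have := hf'.integrable_norm_rpow (by simp; linarith) ENNReal.ofReal_ne_top
    rwa [ENNReal.toReal_ofReal (by linarith)] at this
  rw [intervalIntegral.integral_of_le (neg_le_self pi_pos.le),
    ← Real.mul_rpow (by positivity) (integral_nonneg fun x => by positivity)]
  exact Real.rpow_le_rpow
    (Finset.sum_nonneg fun k _ => Real.rpow_nonneg (singularValues_nonneg _ k) p)
    (sum_rpow_singularValues_toeplitzMat_le hp (hf'.integrable (ENNReal.one_le_ofReal.mpr hp)) hfp)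
    (by positivity)
end

section
/- Let λ, μ ∈ (0,1) and θ ∈ ℝ. Then the series Σ_{j=0}^{∞} √λ · μ^{j/2} · L_j^{(−1)}(−ln λ) · e^{i j θ} converges absolutely, and its sum equals λ^{−1/2 + 1/(1 − √μ e^{iθ})}, where for z ∈ ℂ we set λ^z := exp(z · ln λ). Moreover, the squared modulus of this sum equals λ^{(1−μ)/(1 − 2√μ cos θ + μ)}. -/
open MeasureTheory

/-- Generalised Laguerre polynomial `L_m^{(-1)}`. -/
noncomputable def lagM1 (m : ℕ) (x : ℝ) : ℝ :=
  if m = 0 then 1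
  else ∑ l ∈ Finset.Icc 1 m, (Nat.choose (m - 1) (l - 1) : ℝ) * (-x) ^ l / (Nat.factorial l : ℝ)

/-- The sequence `a_j^{(λ,μ)}`, extended by zero to negative indices. -/
noncomputable def aInt (lam mu : ℝ) (j : ℤ) : ℝ :=
  if j < 0 then 0
  else Real.sqrt lam * mu ^ ((j : ℝ) / 2) * lagM1 j.toNat (-Real.log lam)

/-- The Toeplitz matrix built from the sequence `a^{(λ,μ)}`. -/
noncomputable def toepA (lam mu : ℝ) (n : ℕ) : Matrix (Fin n) (Fin n) ℂ :=
  Matrix.of fun i k => ((aInt lam mu (((i : ℕ) : ℤ) - ((k : ℕ) : ℤ)) : ℝ) : ℂ)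

/-!
Expanding `exp (c t / (1 - t)) = ∑ₗ cˡ tˡ (1 - t)⁻ˡ / l!` and each `(1 - t)⁻ˡ` as a binomial series
gives an absolutely convergent double series; regrouping it along `l + k = m` shows that the
coefficient of `tᵐ` is `L_m^{(-1)}(-c)`, i.e. `∑ₘ L_m^{(-1)}(x) tᵐ = exp (-x t / (1 - t))` for
`‖t‖ < 1`. With `t = √μ e^{iθ}` and `x = -ln λ` the series is `√λ` times this generating
function, and `|λ^z|² = λ^{2 Re z}` with `2 Re (1 / (1 - t)) - 1 = (1 - |t|²) / |1 - t|²`.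
-/

open Finset
open scoped Nat

theorem HasSum.sum_antidiagonal {α : Type*} [AddCommMonoid α] [TopologicalSpace α]
    [ContinuousAdd α] [RegularSpace α] {F : ℕ × ℕ → α} {a : α} (h : HasSum F a) :
    HasSum (fun n => ∑ p ∈ antidiagonal n, F p) a :=
  (HasAntidiagonal.sigmaAntidiagonalEquivProd.hasSum_iff.2 h).sigma fun n =>
    (sum_coe_sort (antidiagonal n) F) ▸ hasSum_fintype _

section RCLike

variable {𝕜 : Type*} [RCLike 𝕜] {t : 𝕜}

/-- For `l = 0`, truncated subtraction makes `(k - 1).choose k` equal to `if k = 0 then 1 else 0`,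
so the formula needs no case split. -/
theorem hasSum_choose_pred_add_mul_geometric (l : ℕ) (ht : ‖t‖ < 1) :
    HasSum (fun k => ((l + k - 1).choose k : 𝕜) * t ^ k) (1 / (1 - t) ^ l) := by
  cases l with
  | zero =>
    convert hasSum_ite_eq (0 : ℕ) (1 : 𝕜) with k
    · cases k <;> simp
    · simp
  | succ l =>
    convert hasSum_choose_mul_geometric_of_norm_lt_one l ht using 3 with k
    rw [show l + 1 + k - 1 = k + l by omega, Nat.choose_symm_add]

/-- The `(l, k)` term of `∑ₗ cˡ tˡ (1 - t)⁻ˡ / l!` with `(1 - t)⁻ˡ` expanded as a binomial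
series. -/
noncomputable def laguerreDoubleTerm (c t : 𝕜) (p : ℕ × ℕ) : 𝕜 :=
  c ^ p.1 / p.1 ! * t ^ p.1 * (((p.1 + p.2 - 1).choose p.2 : 𝕜) * t ^ p.2)

theorem hasSum_laguerreDoubleTerm_row (c : 𝕜) (ht : ‖t‖ < 1) (l : ℕ) :
    HasSum (fun k => laguerreDoubleTerm c t (l, k)) ((c * (t / (1 - t))) ^ l / l !) := by
  rw [show (c * (t / (1 - t))) ^ l / l ! = c ^ l / l ! * t ^ l * (1 / (1 - t) ^ l) by ring]
  exact (hasSum_choose_pred_add_mul_geometric l ht).mul_left _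

theorem norm_laguerreDoubleTerm (c t : 𝕜) (p : ℕ × ℕ) :
    ‖laguerreDoubleTerm c t p‖ = laguerreDoubleTerm ‖c‖ ‖t‖ p := by
  simp [laguerreDoubleTerm, norm_mul, norm_div, norm_pow]

theorem summable_norm_laguerreDoubleTerm (c : 𝕜) (ht : ‖t‖ < 1) :
    Summable fun p => ‖laguerreDoubleTerm c t p‖ := by
  have ht' : ‖‖t‖‖ < 1 := by rwa [norm_norm]
  simp only [norm_laguerreDoubleTerm]
  refine (summable_prod_of_nonneg fun p => ?_).2
    ⟨fun l => (hasSum_laguerreDoubleTerm_row _ ht' l).summable, ?_⟩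
  · rw [← norm_laguerreDoubleTerm c t]; positivity
  · simpa only [(hasSum_laguerreDoubleTerm_row _ ht' _).tsum_eq] using
      Real.summable_pow_div_factorial _

end RCLike

theorem hasSum_laguerreDoubleTerm (c : ℂ) {t : ℂ} (ht : ‖t‖ < 1) :
    HasSum (laguerreDoubleTerm c t) (Complex.exp (c * (t / (1 - t)))) := by
  have hF := (summable_norm_laguerreDoubleTerm c ht).of_norm.hasSum
  rw [Complex.exp_eq_exp_ℂ, (NormedSpace.expSeries_div_hasSum_exp _).unique
    (hF.prod_fiberwise (hasSum_laguerreDoubleTerm_row c ht))]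
  exact hF

theorem sum_antidiagonal_laguerreDoubleTerm (x : ℝ) (t : ℂ) (m : ℕ) :
    ∑ p ∈ antidiagonal m, laguerreDoubleTerm (-x : ℂ) t p = lagM1 m x * t ^ m := by
  rw [Nat.sum_antidiagonal_eq_sum_range_succ_mk]
  cases m with
  | zero => simp [laguerreDoubleTerm, lagM1]
  | succ n =>
    rw [sum_range_succ', lagM1, if_neg n.succ_ne_zero, ← Ico_add_one_right_eq_Icc,
      sum_Ico_eq_sum_range]
    push_cast
    simp only [sum_mul, laguerreDoubleTerm, zero_add, add_tsub_cancel_right, Nat.choose_succ_self,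
      Nat.cast_zero, zero_mul, mul_zero, add_zero]
    refine sum_congr rfl fun k hk => ?_
    have hkn : k ≤ n := Nat.lt_succ_iff.1 (mem_range.1 hk)
    rw [show k + 1 + (n - k) - 1 = n by omega,
      Nat.choose_symm_of_eq_add (show n = n - k + k by omega), add_comm 1 k,
      add_tsub_cancel_right, show n + 1 = k + 1 + (n - k) by omega, pow_add]
    ring

theorem hasSum_lagM1_mul_pow (x : ℝ) {t : ℂ} (ht : ‖t‖ < 1) :
    HasSum (fun m => (lagM1 m x : ℂ) * t ^ m) (Complex.exp (-x * (t / (1 - t)))) := by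
  simpa only [sum_antidiagonal_laguerreDoubleTerm] using
    (hasSum_laguerreDoubleTerm (-x : ℂ) ht).sum_antidiagonal

theorem summable_norm_lagM1_mul_pow (x : ℝ) {t : ℂ} (ht : ‖t‖ < 1) :
    Summable fun m => ‖(lagM1 m x : ℂ) * t ^ m‖ := by
  refine .of_nonneg_of_le (fun m => norm_nonneg _) (fun m => ?_)
    (summable_norm_laguerreDoubleTerm (-x : ℂ) ht).hasSum.sum_antidiagonal.summable
  rw [← sum_antidiagonal_laguerreDoubleTerm]
  exact norm_sum_le _ _

theorem two_mul_re_one_div_one_sub_sub_one {t : ℂ} (ht : t ≠ 1) :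
    2 * (1 / (1 - t)).re - 1 = (1 - ‖t‖ ^ 2) / Complex.normSq (1 - t) := by
  have hne : Complex.normSq (1 - t) ≠ 0 := by simpa [sub_eq_zero] using ht.symm
  have hD : Complex.normSq (1 - t) = (1 - t.re) ^ 2 + t.im ^ 2 := by
    simp [Complex.normSq_apply, sq]
  rw [one_div, Complex.inv_re, Complex.sub_re, Complex.one_re, Complex.sq_norm,
    Complex.normSq_apply t, eq_div_iff hne, sub_mul, mul_assoc, div_mul_cancel₀ _ hne, hD]
  ring

theorem normSq_one_sub_ofReal_mul_exp (r θ : ℝ) :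
    Complex.normSq (1 - r * Complex.exp (Complex.I * θ)) = 1 - 2 * r * Real.cos θ + r ^ 2 := by
  rw [mul_comm Complex.I, Complex.normSq_apply]
  simp only [Complex.sub_re, Complex.sub_im, Complex.one_re, Complex.one_im, Complex.re_ofReal_mul,
    Complex.im_ofReal_mul, Complex.exp_ofReal_mul_I_re, Complex.exp_ofReal_mul_I_im]
  linear_combination r ^ 2 * Real.sin_sq_add_cos_sq θ

theorem norm_exp_mul_log_sq (z : ℂ) {a : ℝ} (ha : 0 < a) :
    ‖Complex.exp (z * Real.log a)‖ ^ 2 = a ^ (2 * z.re) := by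
  rw [Complex.norm_exp, Complex.re_mul_ofReal, ← Real.exp_nat_mul, Real.rpow_def_of_pos ha]
  push_cast
  ring_nf

theorem ofReal_sqrt_mul_exp_log_mul {a : ℝ} (ha : 0 < a) {t : ℂ} (ht : t ≠ 1) :
    (Real.sqrt a : ℂ) * Complex.exp (Real.log a * (t / (1 - t)))
      = Complex.exp ((-1 / 2 + 1 / (1 - t)) * Real.log a) := by
  rw [← Real.exp_log ha, ← Real.exp_half, Real.log_exp, Complex.ofReal_exp, ← Complex.exp_add]
  congr 1
  field_simp [sub_ne_zero.2 ht.symm]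
  push_cast
  ring

/-- The Fourier-type series with coefficients sqrt(lam) * mu^(j/2) * L_j^(-1)(-ln lam)
converges absolutely, sums to lam^(-1/2 + 1/(1 - sqrt(mu) e^(i θ))), and the squared
modulus of the sum equals lam^((1-mu)/(1 - 2 sqrt(mu) cos θ + mu)). -/
theorem laguerre_series_sum
    (lam mu : ℝ) (hlam : lam ∈ Set.Ioo (0:ℝ) 1) (hmu : mu ∈ Set.Ioo (0:ℝ) 1) (θ : ℝ) :
    Summable (fun j : ℕ =>
        ‖(((Real.sqrt lam * mu ^ ((j : ℝ) / 2) * lagM1 j (-Real.log lam) : ℝ) : ℂ)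
          * Complex.exp (Complex.I * (j : ℂ) * (θ : ℂ)))‖)
    ∧ (∑' j : ℕ, ((Real.sqrt lam * mu ^ ((j : ℝ) / 2) * lagM1 j (-Real.log lam) : ℝ) : ℂ)
          * Complex.exp (Complex.I * (j : ℂ) * (θ : ℂ)))
        = Complex.exp ((-1/2 + 1 / (1 - (Real.sqrt mu : ℂ) * Complex.exp (Complex.I * (θ : ℂ))))
            * (Real.log lam : ℂ))
    ∧ ‖(∑' j : ℕ, ((Real.sqrt lam * mu ^ ((j : ℝ) / 2) * lagM1 j (-Real.log lam) : ℝ) : ℂ)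
          * Complex.exp (Complex.I * (j : ℂ) * (θ : ℂ)))‖ ^ 2
        = lam ^ ((1 - mu) / (1 - 2 * Real.sqrt mu * Real.cos θ + mu)) := by
  set t : ℂ := Real.sqrt mu * Complex.exp (Complex.I * θ)
  have ht_norm : ‖t‖ = Real.sqrt mu := by
    simp [t, Complex.norm_exp]
  have ht : ‖t‖ < 1 := by
    rw [ht_norm, Real.sqrt_lt' one_pos, one_pow]; exact hmu.2
  have ht_ne : t ≠ 1 := fun h => by simp [h] at ht
  have hterm (j : ℕ) : ((Real.sqrt lam * mu ^ ((j : ℝ) / 2) * lagM1 j (-Real.log lam) : ℝ) : ℂ)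
      * Complex.exp (Complex.I * j * θ)
      = Real.sqrt lam * ((lagM1 j (-Real.log lam) : ℂ) * t ^ j) := by
    rw [Real.rpow_div_two_eq_sqrt _ hmu.1.le, Real.rpow_natCast, mul_pow, ← Complex.exp_nat_mul]
    push_cast
    ring_nf
  have hsum := ((hasSum_lagM1_mul_pow _ ht).mul_left (Real.sqrt lam : ℂ)).congr_fun hterm
  rw [Complex.ofReal_neg, neg_neg, ofReal_sqrt_mul_exp_log_mul hlam.1 ht_ne] at hsum
  refine ⟨?_, hsum.tsum_eq, ?_⟩
  · refine ((summable_norm_lagM1_mul_pow (-Real.log lam) ht).mul_left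
      ‖(Real.sqrt lam : ℂ)‖).congr fun j => ?_
    simp only [hterm, norm_mul]
  · have hre : 2 * (-1 / 2 + 1 / (1 - t)).re = 2 * (1 / (1 - t)).re - 1 := by
      simp only [Complex.add_re, Complex.div_ofNat_re, Complex.neg_re, Complex.one_re]
      ring
    rw [hsum.tsum_eq, norm_exp_mul_log_sq _ hlam.1, hre, two_mul_re_one_div_one_sub_sub_one ht_ne,
      ht_norm, normSq_one_sub_ofReal_mul_exp, Real.sq_sqrt hmu.1.le]
end
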